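/- arXiv:1910.14634 — 4 statements merged into one kernel-verified Lean document; each statement's English description precedes it below -/
import Mathlib

section
/- Let α, η, ρ, ξ, ε > 0 with η ≤ 1/α². Suppose two nonnegative real sequences (r̃_τ) and (e_τ) with e_0 = 0 satisfy r̃_τ ≤ (1 - η α²)^τ · ρ and e_τ ≤ (1 + η ε²) e_{τ-1} + η ξ r̃_{τ-1} for all τ ≥ 1. Then for every τ ≤ 1/(2 η ε²), we have e_τ ≤ 2 ξ ρ / α². -/
/-- Lemma 9 (sequence error control): if `r̃_τ ≤ (1 - η α²)^τ ρ` and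
`e_τ ≤ (1 + η ε²) e_{τ-1} + η ξ r̃_{τ-1}` with `e_0 = 0`, then for all
`τ ≤ 1/(2 η ε²)` we have `e_τ ≤ 2 ξ ρ / α²`. -/
theorem stmt_0 (α η ρ ξ ε : ℝ) (hα : 0 < α) (hη : 0 < η) (hρ : 0 < ρ)
    (hξ : 0 < ξ) (hε : 0 < ε) (hηα : η ≤ 1 / α ^ 2)
    (r e : ℕ → ℝ) (hrpos : ∀ τ, 0 ≤ r τ) (hepos : ∀ τ, 0 ≤ e τ) (he0 : e 0 = 0)
    (hr : ∀ τ : ℕ, r τ ≤ (1 - η * α ^ 2) ^ τ * ρ)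
    (he : ∀ τ : ℕ, 1 ≤ τ → e τ ≤ (1 + η * ε ^ 2) * e (τ - 1) + η * ξ * r (τ - 1)) :
    ∀ τ : ℕ, (τ : ℝ) ≤ 1 / (2 * η * ε ^ 2) → e τ ≤ 2 * ξ * ρ / α ^ 2 := by
  have hα2 : (0:ℝ) < α ^ 2 := by positivity
  have hb1 : η * α ^ 2 ≤ 1 := by
    rw [div_eq_mul_inv, one_mul] at hηα
    calc η * α ^ 2 ≤ (α ^ 2)⁻¹ * α ^ 2 := by nlinarith
    _ = 1 := inv_mul_cancel₀ hα2.ne'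
  have hb0 : 0 ≤ 1 - η * α ^ 2 := by linarith
  have ha : 0 < η * ε ^ 2 := by positivity
  -- inductive bound
  have key : ∀ τ : ℕ, e τ ≤ ξ * ρ / α ^ 2 *
      ((1 + η * ε ^ 2) ^ τ - (1 - η * α ^ 2) ^ τ) := by
    intro τ
    induction τ with
    | zero => simp [he0]
    | succ n ih =>
      have h1 := he (n + 1) (by omega)
      simp only [Nat.add_sub_cancel] at h1
      have h2 := hr n
      have hpow : (0:ℝ) ≤ (1 - η * α ^ 2) ^ n := pow_nonneg hb0 n
      have hc : (0:ℝ) < ξ * ρ / α ^ 2 := by positivity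
      calc e (n + 1) ≤ (1 + η * ε ^ 2) * e n + η * ξ * r n := h1
        _ ≤ (1 + η * ε ^ 2) * (ξ * ρ / α ^ 2 *
              ((1 + η * ε ^ 2) ^ n - (1 - η * α ^ 2) ^ n))
            + η * ξ * ((1 - η * α ^ 2) ^ n * ρ) := by
            have hr' : η * ξ * r n ≤ η * ξ * ((1 - η * α ^ 2) ^ n * ρ) := by
              apply mul_le_mul_of_nonneg_left h2 (by positivity)
            nlinarith [mul_le_mul_of_nonneg_left ih (le_of_lt (by positivity : (0:ℝ) < 1 + η * ε ^ 2))]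
        _ ≤ ξ * ρ / α ^ 2 * ((1 + η * ε ^ 2) ^ (n+1) - (1 - η * α ^ 2) ^ (n+1)) := by
            have hηξ : η * ξ * ((1 - η * α ^ 2) ^ n * ρ)
                = ξ * ρ / α ^ 2 * (η * α ^ 2 * (1 - η * α ^ 2) ^ n) := by
              field_simp
            have hstep : (1 - η * α ^ 2) ^ (n+1) ≤
                (1 + η * ε ^ 2 - η * α ^ 2) * (1 - η * α ^ 2) ^ n := by
              rw [pow_succ]
              nlinarith [pow_nonneg hb0 n]
            rw [hηξ]
            rw [show (1 + η * ε ^ 2) * (ξ * ρ / α ^ 2 * ((1 + η * ε ^ 2) ^ n - (1 - η * α ^ 2) ^ n))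
                + ξ * ρ / α ^ 2 * (η * α ^ 2 * (1 - η * α ^ 2) ^ n)
                = ξ * ρ / α ^ 2 * ((1 + η * ε ^ 2) ^ (n+1)
                  - (1 + η * ε ^ 2 - η * α ^ 2) * (1 - η * α ^ 2) ^ n) by ring]
            apply mul_le_mul_of_nonneg_left _ hc.le
            linarith
  intro τ hτ
  have haτ : η * ε ^ 2 * τ ≤ 1 / 2 := by
    rw [le_div_iff₀ (by positivity : (0:ℝ) < 2 * η * ε ^ 2)] at hτ
    nlinarith
  have hexp : (1 + η * ε ^ 2) ^ τ ≤ Real.exp (1/2) := by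
    calc (1 + η * ε ^ 2) ^ τ ≤ (Real.exp (η * ε ^ 2)) ^ τ := by
          rw [add_comm]
          exact pow_le_pow_left₀ (by positivity) (Real.add_one_le_exp _) τ
      _ = Real.exp (η * ε ^ 2 * τ) := by rw [← Real.exp_nat_mul]; ring_nf
      _ ≤ Real.exp (1/2) := Real.exp_le_exp.mpr haτ
  have hexp2 : Real.exp (1/2) ≤ 2 := by
    nlinarith [Real.exp_one_lt_d9, Real.exp_pos (1/2:ℝ),
      Real.exp_add (1/2:ℝ) (1/2), Real.exp_one_gt_d9]
  calc e τ ≤ ξ * ρ / α ^ 2 * ((1 + η * ε ^ 2) ^ τ - (1 - η * α ^ 2) ^ τ) := key τ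
    _ ≤ ξ * ρ / α ^ 2 * (1 + η * ε ^ 2) ^ τ := by
        apply mul_le_mul_of_nonneg_left _ (by positivity)
        have := pow_nonneg hb0 τ; linarith
    _ ≤ ξ * ρ / α ^ 2 * 2 := by
        apply mul_le_mul_of_nonneg_left (hexp.trans hexp2) (by positivity)
    _ = 2 * ξ * ρ / α ^ 2 := by ring
end

section
/- Let J ∈ ℝ^{n×N} with singular values at most σ_max, and suppose the signal x lies in the span of the top p left singular vectors w₁,…,w_p of J, with y = x + z. Running gradient descent on (1/2)‖J c − y‖² with step size η ≤ 1/σ_max² from c₀ = 0 yields, for every iteration τ, ‖x − J c_τ‖ ≤ (1 − η σ_p²)^τ ‖x‖ + sqrt( Σ_{i=1}^n ((1 − η σ_i²)^τ − 1)² ⟨w_i, z⟩² ). -/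
open Matrix Finset

/-!
In the left singular basis the iteration decouples: the residual `y - J c_τ` has coordinates
`(1 - η σ_i²)^τ ⟨w_i, y⟩`, so `x - J c_τ` has coordinates
`(1 - η σ_i²)^τ ⟨w_i, x⟩ + ((1 - η σ_i²)^τ - 1) ⟨w_i, z⟩`. The triangle inequality splits the two
parts; the signal part lives on the top `p` coordinates, where the step size makes every factor
lie in `[0, (1 - η σ_p²)^τ]`, and `W` preserves Euclidean norms.
-/

section EuclideanSums

variable {ι κ : Type*} [Fintype ι] [Fintype κ]

theorem Real.sqrt_sum_sq_add_le (a b : ι → ℝ) :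
    √(∑ i, (a i + b i) ^ 2) ≤ √(∑ i, a i ^ 2) + √(∑ i, b i ^ 2) := by
  simpa [EuclideanSpace.norm_eq, sq_abs] using
    norm_add_le (WithLp.toLp 2 a : EuclideanSpace ℝ ι) (WithLp.toLp 2 b)

theorem Real.sqrt_sum_sq_mul_le {m a : ι → ℝ} {M : ℝ} (hM : 0 ≤ M)
    (h : ∀ i, a i ≠ 0 → |m i| ≤ M) :
    √(∑ i, (m i * a i) ^ 2) ≤ M * √(∑ i, a i ^ 2) := by
  have hsum : ∑ i, (m i * a i) ^ 2 ≤ M ^ 2 * ∑ i, a i ^ 2 := by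
    rw [mul_sum]
    refine sum_le_sum fun i _ => ?_
    rcases eq_or_ne (a i) 0 with ha | ha
    · simp [ha]
    · rw [mul_pow, ← sq_abs (m i)]
      gcongr
      exact h i ha
  calc √(∑ i, (m i * a i) ^ 2) ≤ √(M ^ 2 * ∑ i, a i ^ 2) := Real.sqrt_le_sqrt hsum
    _ = M * √(∑ i, a i ^ 2) := by rw [Real.sqrt_mul (sq_nonneg M), Real.sqrt_sq hM]

theorem Matrix.sum_sq_mulVec_of_transpose_mul_self [DecidableEq ι] {U : Matrix κ ι ℝ}
    (hU : Uᵀ * U = 1) (v : ι → ℝ) : ∑ j, (U *ᵥ v) j ^ 2 = ∑ i, v i ^ 2 := by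
  have hdot : U *ᵥ v ⬝ᵥ U *ᵥ v = v ⬝ᵥ v := by
    rw [dotProduct_mulVec, ← mulVec_transpose, mulVec_mulVec, hU, one_mulVec]
  simpa only [dotProduct, sq] using hdot

end EuclideanSums

theorem Matrix.transpose_mulVec_eq_zero_of_mem_span_cols {ι κ : Type*} [Fintype ι]
    [DecidableEq κ] {W : Matrix ι κ ℝ} (hW : Wᵀ * W = 1)
    {P : κ → Prop} {x : ι → ℝ}
    (hx : x ∈ Submodule.span ℝ {w : ι → ℝ | ∃ i, P i ∧ w = fun j => W j i})
    {i : κ} (hi : ¬P i) : (Wᵀ *ᵥ x) i = 0 := by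
  suffices Submodule.span ℝ {w : ι → ℝ | ∃ i, P i ∧ w = fun j => W j i} ≤
      LinearMap.ker ((LinearMap.proj i).comp Wᵀ.mulVecLin) from this hx
  rw [Submodule.span_le]
  rintro _ ⟨k, hk, rfl⟩
  have hcol : (Wᵀ *ᵥ fun j => W j k) i = (Wᵀ * W) i k := by
    simp [mulVec, mul_apply, dotProduct]
  have hik : i ≠ k := fun h => hi (h ▸ hk)
  rw [SetLike.mem_coe, LinearMap.mem_ker, LinearMap.comp_apply, mulVecLin_apply,
    LinearMap.proj_apply, hcol, hW, one_apply_ne hik]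

theorem Matrix.one_sub_smul_mul_transpose_eq_of_svd {ι κ ν : Type*} [Fintype κ] [Fintype ν]
    [DecidableEq ι] [DecidableEq κ] {J : Matrix ι ν ℝ} {W : Matrix ι κ ℝ}
    {V : Matrix ν κ ℝ} {σ : κ → ℝ} (hWW : W * Wᵀ = 1) (hV : Vᵀ * V = 1)
    (hSVD : J = W * diagonal σ * Vᵀ) (η : ℝ) :
    1 - η • (J * Jᵀ) = W * diagonal (fun i => 1 - η * σ i ^ 2) * Wᵀ := by
  have hJJ : J * Jᵀ = W * diagonal (fun i => σ i ^ 2) * Wᵀ := by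
    rw [hSVD, transpose_mul, transpose_mul, diagonal_transpose, transpose_transpose]
    calc W * diagonal σ * Vᵀ * (V * (diagonal σ * Wᵀ))
        = W * (diagonal σ * (Vᵀ * V) * diagonal σ) * Wᵀ := by simp only [Matrix.mul_assoc]
      _ = _ := by rw [hV, Matrix.mul_one, diagonal_mul_diagonal]; simp only [sq]
  have hdiag : diagonal (fun i => 1 - η * σ i ^ 2) = 1 - η • diagonal (fun i => σ i ^ 2) := by
    rw [← diagonal_one, ← diagonal_smul, diagonal_sub]
    rfl
  rw [hJJ, hdiag, Matrix.mul_sub, Matrix.sub_mul, Matrix.mul_one, hWW, Matrix.mul_smul,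
    Matrix.smul_mul]

theorem Matrix.transpose_mul_pow_conj_diagonal {ι κ : Type*} [Fintype ι] [Fintype κ]
    [DecidableEq ι] [DecidableEq κ] {W : Matrix ι κ ℝ} (hW : Wᵀ * W = 1)
    (d : κ → ℝ) (τ : ℕ) : Wᵀ * (W * diagonal d * Wᵀ) ^ τ = diagonal (d ^ τ) * Wᵀ := by
  induction τ with
  | zero => simp
  | succ τ ih =>
    calc Wᵀ * (W * diagonal d * Wᵀ) ^ (τ + 1)
        = (Wᵀ * W) * diagonal d * (Wᵀ * (W * diagonal d * Wᵀ) ^ τ) := by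
          simp only [pow_succ', Matrix.mul_assoc]
      _ = diagonal (d ^ (τ + 1)) * Wᵀ := by
          rw [ih, hW, Matrix.one_mul, ← Matrix.mul_assoc, diagonal_mul_diagonal, pow_succ']
          rfl

theorem Matrix.sub_mulVec_gradientDescent_eq_pow {ι ν : Type*} [Fintype ι] [Fintype ν]
    [DecidableEq ι] (J : Matrix ι ν ℝ) (η : ℝ) (y : ι → ℝ) {c : ℕ → ν → ℝ} (hc0 : c 0 = 0)
    (hstep : ∀ τ, c (τ + 1) = c τ - η • (Jᵀ *ᵥ (J *ᵥ c τ - y))) (τ : ℕ) :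
    y - J *ᵥ c τ = (1 - η • (J * Jᵀ)) ^ τ *ᵥ y := by
  induction τ with
  | zero => simp [hc0]
  | succ τ ih =>
    rw [pow_succ', ← mulVec_mulVec, ← ih, hstep, mulVec_sub, mulVec_smul, mulVec_mulVec,
      sub_mulVec, one_mulVec, smul_mulVec, mulVec_sub, mulVec_sub, smul_sub, smul_sub]
    abel

theorem Matrix.transpose_mulVec_sub_mulVec_gradientDescent {ι κ ν : Type*} [Fintype ι]
    [Fintype κ] [Fintype ν] [DecidableEq ι] [DecidableEq κ] {J : Matrix ι ν ℝ}
    {W : Matrix ι κ ℝ} {V : Matrix ν κ ℝ} {σ : κ → ℝ} (hW : Wᵀ * W = 1) (hWW : W * Wᵀ = 1)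
    (hV : Vᵀ * V = 1) (hSVD : J = W * diagonal σ * Vᵀ) (η : ℝ) (y : ι → ℝ) {c : ℕ → ν → ℝ}
    (hc0 : c 0 = 0) (hstep : ∀ τ, c (τ + 1) = c τ - η • (Jᵀ *ᵥ (J *ᵥ c τ - y))) (τ : ℕ) :
    Wᵀ *ᵥ (y - J *ᵥ c τ) = fun i => (1 - η * σ i ^ 2) ^ τ * (Wᵀ *ᵥ y) i := by
  rw [sub_mulVec_gradientDescent_eq_pow J η y hc0 hstep,
    one_sub_smul_mul_transpose_eq_of_svd hWW hV hSVD, mulVec_mulVec,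
    transpose_mul_pow_conj_diagonal hW, ← mulVec_mulVec]
  ext i
  exact mulVec_diagonal _ _ i

theorem abs_pow_one_sub_mul_sq_le {η s t : ℝ} (hη : 0 ≤ η) (hs : 0 ≤ s) (hst : s ≤ t)
    (ht : η * t ^ 2 ≤ 1) (τ : ℕ) : |(1 - η * t ^ 2) ^ τ| ≤ (1 - η * s ^ 2) ^ τ := by
  have hnonneg : 0 ≤ 1 - η * t ^ 2 := by linarith
  rw [abs_of_nonneg (pow_nonneg hnonneg τ)]
  gcongr

theorem stmt_4_general {n N : ℕ} (J : Matrix (Fin n) (Fin N) ℝ)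
    (W : Matrix (Fin n) (Fin n) ℝ) (V : Matrix (Fin N) (Fin n) ℝ)
    (σ : Fin n → ℝ) (hσpos : ∀ i, 0 ≤ σ i) (hσmono : Antitone σ)
    (σmax : ℝ) (hσmax : ∀ i, σ i ≤ σmax)
    (hW : Wᵀ * W = 1) (hWW : W * Wᵀ = 1) (hV : Vᵀ * V = 1)
    (hSVD : J = W * Matrix.diagonal σ * Vᵀ)
    (p : ℕ) (hp : p < n)
    (x z y : Fin n → ℝ) (hy : y = x + z)
    (hx : x ∈ Submodule.span ℝ {w : Fin n → ℝ | ∃ i : Fin n, i.val < p ∧ w = fun j => W j i})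
    (η : ℝ) (hη : 0 < η) (hηstep : η * σmax ^ 2 ≤ 1)
    (c : ℕ → Fin N → ℝ) (hc0 : c 0 = 0)
    (hstep : ∀ τ : ℕ, c (τ + 1) = c τ - η • (Jᵀ.mulVec (J.mulVec (c τ) - y))) :
    ∀ τ : ℕ,
      Real.sqrt (∑ j : Fin n, (x j - J.mulVec (c τ) j) ^ 2) ≤
        (1 - η * σ ⟨p - 1, Nat.lt_of_le_of_lt (Nat.pred_le p) hp⟩ ^ 2) ^ τ
          * Real.sqrt (∑ j : Fin n, x j ^ 2) +
        Real.sqrt (∑ i : Fin n,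
          ((1 - η * σ i ^ 2) ^ τ - 1) ^ 2 * ((fun j => W j i) ⬝ᵥ z) ^ 2) := by
  intro τ
  set q : Fin n := ⟨p - 1, Nat.lt_of_le_of_lt (Nat.pred_le p) hp⟩
  set m : Fin n → ℝ := fun i => (1 - η * σ i ^ 2) ^ τ
  have hm_le : ∀ i, i ≤ q → |m i| ≤ m q := fun i hiq =>
    abs_pow_one_sub_mul_sq_le hη.le (hσpos q) (hσmono hiq) ((mul_le_mul_of_nonneg_left
      (pow_le_pow_left₀ (hσpos i) (hσmax i) 2) hη.le).trans hηstep) τ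
  have hcoord : Wᵀ *ᵥ (x - J *ᵥ c τ) = fun i => m i * (Wᵀ *ᵥ x) i + (m i - 1) * (Wᵀ *ᵥ z) i := by
    have hxy : x - J *ᵥ c τ = (y - J *ᵥ c τ) - z := by rw [hy]; abel
    ext i
    rw [hxy, mulVec_sub, Pi.sub_apply,
      transpose_mulVec_sub_mulVec_gradientDescent hW hWW hV hSVD η y hc0 hstep, hy, mulVec_add]
    simp only [m, Pi.add_apply]
    ring
  have hWt : Wᵀᵀ * Wᵀ = 1 := by rwa [transpose_transpose]
  have hnorm := sum_sq_mulVec_of_transpose_mul_self hWt (x - J *ᵥ c τ)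
  rw [hcoord] at hnorm
  calc √(∑ j, (x j - (J *ᵥ c τ) j) ^ 2)
      = √(∑ i, (m i * (Wᵀ *ᵥ x) i + (m i - 1) * (Wᵀ *ᵥ z) i) ^ 2) := congrArg Real.sqrt hnorm.symm
    _ ≤ √(∑ i, (m i * (Wᵀ *ᵥ x) i) ^ 2) + √(∑ i, ((m i - 1) * (Wᵀ *ᵥ z) i) ^ 2) :=
        Real.sqrt_sum_sq_add_le _ _
    _ ≤ m q * √(∑ i, (Wᵀ *ᵥ x) i ^ 2) + √(∑ i, ((m i - 1) * (Wᵀ *ᵥ z) i) ^ 2) := by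
        gcongr
        refine Real.sqrt_sum_sq_mul_le ((abs_nonneg _).trans (hm_le q le_rfl)) fun i hi => ?_
        refine hm_le i (Fin.mk_le_mk.mpr ?_)
        by_contra hbig
        exact hi (transpose_mulVec_eq_zero_of_mem_span_cols hW hx (by omega))
    _ = _ := by
        rw [sum_sq_mulVec_of_transpose_mul_self hWt]
        simp only [mul_pow]
        rfl

/-- Equation (denoising bound for linear least squares): if `x` lies in the span of the
top `p` left singular vectors of `J` and `y = x + z`, gradient descent with step size
`η ≤ 1/σ_max²` from `c_0 = 0` satisfies
`‖x - J c_τ‖ ≤ (1 - η σ_p²)^τ ‖x‖ + sqrt(Σ_i ((1 - η σ_i²)^τ - 1)² ⟨w_i, z⟩²)`. -/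
theorem stmt_4 {n N : ℕ} (J : Matrix (Fin n) (Fin N) ℝ)
    (W : Matrix (Fin n) (Fin n) ℝ) (V : Matrix (Fin N) (Fin n) ℝ)
    (σ : Fin n → ℝ) (hσpos : ∀ i, 0 ≤ σ i) (hσmono : Antitone σ)
    (σmax : ℝ) (hσmax : ∀ i, σ i ≤ σmax)
    (hW : Wᵀ * W = 1) (hWW : W * Wᵀ = 1) (hV : Vᵀ * V = 1)
    (hSVD : J = W * Matrix.diagonal σ * Vᵀ)
    (p : ℕ) (hp1 : 1 ≤ p) (hp : p < n)
    (x z y : Fin n → ℝ) (hy : y = x + z)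
    (hx : x ∈ Submodule.span ℝ {w : Fin n → ℝ | ∃ i : Fin n, i.val < p ∧ w = fun j => W j i})
    (η : ℝ) (hη : 0 < η) (hηstep : η * σmax ^ 2 ≤ 1)
    (c : ℕ → Fin N → ℝ) (hc0 : c 0 = 0)
    (hstep : ∀ τ : ℕ, c (τ + 1) = c τ - η • (Jᵀ.mulVec (J.mulVec (c τ) - y))) :
    ∀ τ : ℕ,
      Real.sqrt (∑ j : Fin n, (x j - J.mulVec (c τ) j) ^ 2) ≤
        (1 - η * σ ⟨p - 1, Nat.lt_of_le_of_lt (Nat.pred_le p) hp⟩ ^ 2) ^ τ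
          * Real.sqrt (∑ j : Fin n, x j ^ 2) +
        Real.sqrt (∑ i : Fin n,
          ((1 - η * σ i ^ 2) ^ τ - 1) ^ 2 * ((fun j => W j i) ⬝ᵥ z) ^ 2) :=
  stmt_4_general J W V σ hσpos hσmono σmax hσmax hW hWW hV hSVD p hp x z y hy hx η hη hηstep c hc0
    hstep
end

section
/- Let X ∈ ℝ^{n×N} with N ≥ n and let Σ be an n×n symmetric positive semidefinite matrix such that the operator norm ‖X Xᵀ − Σ‖ ≤ ε₀²/4 for some ε₀ ≥ 0. Then there exists a matrix J ∈ ℝ^{n×N} with J Jᵀ = Σ and ‖J − X‖ ≤ ε₀ (operator norm). -/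
/-!
Write `X = B V` with `B = (X Xᵀ)^{1/2}` and `V` a co-isometry (`V Vᵀ = 1`; this needs `n ≤ N`),
and take `J = Σ^{1/2} V`. Then `J Jᵀ = Σ`, and since right multiplication by a co-isometry
preserves the operator norm, `‖J - X‖ = ‖Σ^{1/2} - B‖ ≤ ‖Σ - B²‖^{1/2} ≤ ε₀ / 2`.
The inequality `‖C - D‖² ≤ ‖C² - D²‖` for psd `C`, `D` is checked on each unit eigenvector `v`
of `C - D`: with eigenvalue `μ` one has `⟪v, (C² - D²) v⟫ = μ (⟪v, C v⟫ + ⟪v, D v⟫)`, while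
`|μ| = |⟪v, C v⟫ - ⟪v, D v⟫| ≤ ⟪v, C v⟫ + ⟪v, D v⟫`.
-/

open Matrix

/-- The spectral (ℓ₂ operator) norm of a real matrix. -/
noncomputable def specNorm {m n : ℕ} (A : Matrix (Fin m) (Fin n) ℝ) : ℝ :=
  ‖(Matrix.toEuclideanLin A).toContinuousLinearMap‖

open Module
open scoped RealInnerProductSpace Matrix.Norms.L2Operator MatrixOrder

section

variable {F : Type*} [NormedAddCommGroup F] [InnerProductSpace ℝ F] [FiniteDimensional ℝ F]

theorem exists_orthonormalBasis_smul_eq_of_card_eq {ι : Type*} [Fintype ι]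
    (hcard : finrank ℝ F = Fintype.card ι) {g : ι → F}
    (hg : Pairwise fun i j => ⟪g i, g j⟫ = 0) :
    ∃ b : OrthonormalBasis ι ℝ F, ∀ i, g i = ‖g i‖ • b i := by
  set s : Set ι := {i | g i ≠ 0}
  have hs : Orthonormal ℝ (s.domRestrict fun i => ‖g i‖⁻¹ • g i) := by
    refine ⟨fun ⟨i, hi⟩ => ?_, fun ⟨i, _⟩ ⟨j, _⟩ hij => ?_⟩
    · simp [norm_smul, inv_mul_cancel₀ (norm_ne_zero_iff.mpr hi)]
    · simp [real_inner_smul_left, real_inner_smul_right, hg (Subtype.coe_ne_coe.mpr hij)]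
  obtain ⟨b, hb⟩ := hs.exists_orthonormalBasis_extension_of_card_eq hcard
  refine ⟨b, fun i => ?_⟩
  by_cases hi : g i = 0
  · simp [hi]
  · rw [hb i hi, smul_inv_smul₀ (norm_ne_zero_iff.mpr hi)]

theorem exists_orthonormal_smul_eq_of_card_le {ι : Type*} [Fintype ι]
    (hcard : Fintype.card ι ≤ finrank ℝ F) {g : ι → F}
    (hg : Pairwise fun i j => ⟪g i, g j⟫ = 0) :
    ∃ e : ι → F, Orthonormal ℝ e ∧ ∀ i, g i = ‖g i‖ • e i := by
  set g' : ι ⊕ Fin (finrank ℝ F - Fintype.card ι) → F := Sum.elim g 0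
  have hg' : Pairwise fun i j => ⟪g' i, g' j⟫ = 0 := by
    rintro (i | i) (j | j) hij
    · exact hg fun h => hij (congrArg Sum.inl h)
    all_goals simp [g']
  obtain ⟨b, hb⟩ := exists_orthonormalBasis_smul_eq_of_card_eq (by simp; omega) hg'
  exact ⟨b ∘ Sum.inl, b.orthonormal.comp _ Sum.inl_injective, fun i => hb (Sum.inl i)⟩

variable {E : Type*} [NormedAddCommGroup E] [InnerProductSpace ℝ E] [FiniteDimensional ℝ E]

theorem LinearMap.IsPositive.exists_linearIsometry_comp_eq {R : E →ₗ[ℝ] E} (hR : R.IsPositive)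
    (hdim : finrank ℝ E ≤ finrank ℝ F) {T : E →ₗ[ℝ] F}
    (hTR : ∀ x y, ⟪T x, T y⟫ = ⟪R x, R y⟫) :
    ∃ U : E →ₗᵢ[ℝ] F, T = U.toLinearMap ∘ₗ R := by
  set b := hR.isSymmetric.eigenvectorBasis rfl
  set μ := hR.isSymmetric.eigenvalues rfl
  have hRb : ∀ i, R (b i) = μ i • b i := hR.isSymmetric.apply_eigenvectorBasis rfl
  have hTb : Pairwise fun i j => ⟪T (b i), T (b j)⟫ = 0 := fun i j hij => by
    dsimp only
    rw [hTR, hRb, hRb, real_inner_smul_left, real_inner_smul_right,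
      b.orthonormal.inner_eq_zero hij, mul_zero, mul_zero]
  obtain ⟨e, he, hTe⟩ := exists_orthonormal_smul_eq_of_card_le (by simpa using hdim) hTb
  have hnorm : ∀ i, ‖T (b i)‖ = μ i := fun i => by
    rw [← sq_eq_sq₀ (norm_nonneg _) (hR.nonneg_eigenvalues rfl i), ← real_inner_self_eq_norm_sq,
      hTR, hRb, real_inner_smul_left, real_inner_smul_right, real_inner_self_eq_norm_sq,
      b.orthonormal.1 i]
    ring
  have hconstr : ∀ i, b.toBasis.constr ℝ e (b i) = e i := fun i => by simp
  refine ⟨(b.toBasis.constr ℝ e).isometryOfOrthonormal (v := b.toBasis) (by simp)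
    (by simp [Function.comp_def, hconstr, he]), b.toBasis.ext fun i => ?_⟩
  simp only [OrthonormalBasis.coe_toBasis, LinearMap.comp_apply, hRb, map_smul,
    LinearIsometry.coe_toLinearMap]
  rw [hTe i, hnorm]
  exact congrArg _ (hconstr i).symm

end

namespace Matrix

variable {m n : Type*} [Fintype m] [DecidableEq m] [Fintype n] [DecidableEq n]

theorem l2_opNorm_mul_self_conjTranspose {𝕜 : Type*} [RCLike 𝕜] (A : Matrix m n 𝕜) :
    ‖A * Aᴴ‖ = ‖A‖ * ‖A‖ := by
  simpa [l2_opNorm_conjTranspose] using l2_opNorm_conjTranspose_mul_self Aᴴ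

theorem l2_opNorm_mul_of_mul_conjTranspose_eq_one {𝕜 : Type*} [RCLike 𝕜] (A : Matrix m m 𝕜)
    {V : Matrix m n 𝕜} (hV : V * Vᴴ = 1) : ‖A * V‖ = ‖A‖ := by
  rw [← mul_self_inj (norm_nonneg _) (norm_nonneg _), ← l2_opNorm_mul_self_conjTranspose,
    ← l2_opNorm_mul_self_conjTranspose, conjTranspose_mul,
    Matrix.mul_assoc, ← Matrix.mul_assoc V, hV, Matrix.one_mul]

theorem IsHermitian.l2_opNorm_eq_norm_eigenvalues {𝕜 : Type*} [RCLike 𝕜] {A : Matrix n n 𝕜}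
    (hA : A.IsHermitian) : ‖A‖ = ‖hA.eigenvalues‖ := by
  conv_lhs => rw [hA.spectral_theorem, Unitary.conjStarAlgAut_apply]
  rw [CStarRing.norm_mul_mem_unitary _ (Unitary.star_mem (SetLike.coe_mem _)),
    CStarRing.norm_coe_unitary_mul, l2_opNorm_diagonal]
  simp only [Pi.norm_def, Function.comp_apply]
  congr! 3 with i
  exact Subtype.ext (RCLike.norm_ofReal _)

theorem abs_dotProduct_mulVec_le_l2_opNorm (A : Matrix n n ℝ) {v : EuclideanSpace ℝ n}
    (hv : ‖v‖ = 1) : |v ⬝ᵥ A *ᵥ v| ≤ ‖A‖ := by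
  rw [← inner_toEuclideanCLM]
  calc _ ≤ ‖v‖ * ‖toEuclideanCLM (n := n) (𝕜 := ℝ) A v‖ := abs_real_inner_le_norm _ _
    _ ≤ ‖v‖ * (‖A‖ * ‖v‖) := by gcongr; exact (toEuclideanCLM (n := n) (𝕜 := ℝ) A).le_opNorm v
    _ = ‖A‖ := by rw [hv]; ring

theorem PosSemidef.sq_eigenvalues_sub_le {C D : Matrix n n ℝ} (hC : C.PosSemidef)
    (hD : D.PosSemidef) (i : n) :
    (hC.1.sub hD.1).eigenvalues i ^ 2 ≤ ‖C * C - D * D‖ := by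
  set hM := hC.1.sub hD.1
  set v := hM.eigenvectorBasis i
  set μ := hM.eigenvalues i
  have hv1 : ‖v‖ = 1 := hM.eigenvectorBasis.orthonormal.1 i
  have hv : v ⬝ᵥ v = 1 := by
    have := real_inner_self_eq_norm_sq v
    rw [hv1, EuclideanSpace.inner_eq_star_dotProduct] at this
    simpa using this
  have hMv : (C - D) *ᵥ v = μ • v := hM.mulVec_eigenvectorBasis i
  set c := v ⬝ᵥ C *ᵥ v
  set d := v ⬝ᵥ D *ᵥ v
  have hc : 0 ≤ c := by simpa using hC.dotProduct_mulVec_nonneg v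
  have hd : 0 ≤ d := by simpa using hD.dotProduct_mulVec_nonneg v
  have hμ : μ = c - d := by
    simpa [sub_mulVec, dotProduct_sub, hv] using (congrArg (v ⬝ᵥ ·) hMv).symm
  have hquad : v ⬝ᵥ (C * C - D * D) *ᵥ v = μ * (c + d) := by
    have hsplit : C * C - D * D = C * (C - D) + (C - D) * D := by noncomm_ring
    have hMt : (C - D)ᵀ = C - D := hM
    rw [hsplit, add_mulVec, dotProduct_add, ← mulVec_mulVec, ← mulVec_mulVec, hMv,
      dotProduct_mulVec v (C - D), ← mulVec_transpose, hMt, hMv]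
    simp only [mulVec_smul, dotProduct_smul, smul_eq_mul, smul_dotProduct, c, d]
    ring
  have hle := abs_dotProduct_mulVec_le_l2_opNorm (C * C - D * D) hv1
  rw [hquad, abs_mul, abs_of_nonneg (add_nonneg hc hd)] at hle
  have hμcd : |μ| ≤ c + d := by
    rw [hμ]; exact abs_sub_le_of_nonneg_of_le hc (by linarith) hd (by linarith)
  calc μ ^ 2 = |μ| * |μ| := by rw [← sq_abs, sq]
    _ ≤ |μ| * (c + d) := by gcongr
    _ ≤ _ := hle

theorem PosSemidef.l2_opNorm_sub_le_sqrt {C D : Matrix n n ℝ} (hC : C.PosSemidef)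
    (hD : D.PosSemidef) : ‖C - D‖ ≤ √‖C * C - D * D‖ := by
  rw [(hC.1.sub hD.1).l2_opNorm_eq_norm_eigenvalues, pi_norm_le_iff_of_nonneg (Real.sqrt_nonneg _)]
  exact fun i => Real.abs_le_sqrt (hC.sq_eigenvalues_sub_le hD i)

theorem PosSemidef.exists_posSemidef_mul_self_eq {S : Matrix n n ℝ} (hS : S.PosSemidef) :
    ∃ C : Matrix n n ℝ, C.PosSemidef ∧ C * C = S :=
  ⟨CFC.sqrt S, (CFC.sqrt_nonneg S).posSemidef, CFC.sqrt_mul_sqrt_self S hS.nonneg⟩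

theorem toEuclideanLin_transpose_eq_adjoint (A : Matrix m n ℝ) :
    toEuclideanLin Aᵀ = (toEuclideanLin A).adjoint := by
  rw [← conjTranspose_eq_transpose_of_trivial, toEuclideanLin_conjTranspose_eq_adjoint]

theorem PosSemidef.exists_polar_decomposition (hmn : Fintype.card m ≤ Fintype.card n)
    (X : Matrix m n ℝ) {B : Matrix m m ℝ} (hB : B.PosSemidef) (hBX : B * B = X * Xᵀ) :
    ∃ V : Matrix m n ℝ, V * Vᵀ = 1 ∧ X = B * V := by
  have hBt : toEuclideanLin B = (toEuclideanLin B).adjoint := by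
    rw [← toEuclideanLin_transpose_eq_adjoint, ← conjTranspose_eq_transpose_of_trivial, hB.1.eq]
  have hinner : ∀ x y, ⟪toEuclideanLin Xᵀ x, toEuclideanLin Xᵀ y⟫ =
      ⟪toEuclideanLin B x, toEuclideanLin B y⟫ := fun x y => by
    rw [toEuclideanLin_transpose_eq_adjoint, LinearMap.adjoint_inner_left, ← LinearMap.comp_apply,
      ← toEuclideanLin_transpose_eq_adjoint, ← toLpLin_mul_same, ← hBX, toLpLin_mul_same,
      LinearMap.comp_apply, hBt, LinearMap.adjoint_inner_left, ← hBt]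
  obtain ⟨U, hU⟩ := (isPositive_toEuclideanLin_iff.mpr hB).exists_linearIsometry_comp_eq
    (by simpa using hmn) hinner
  obtain ⟨W, hW⟩ := toEuclideanLin.surjective U.toLinearMap
  refine ⟨Wᵀ, toEuclideanLin.injective ?_, ?_⟩
  · rw [transpose_transpose, toLpLin_mul_same, toEuclideanLin_transpose_eq_adjoint, hW,
      U.adjoint_comp_self', toLpLin_one]
  · have hXt : Xᵀ = W * B := toEuclideanLin.injective (by rw [hU, toLpLin_mul_same, hW])
    rw [← transpose_transpose X, hXt, transpose_mul, ← conjTranspose_eq_transpose_of_trivial B,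
      hB.1.eq]

end Matrix

theorem specNorm_eq_l2_opNorm {m n : ℕ} (A : Matrix (Fin m) (Fin n) ℝ) : specNorm A = ‖A‖ := rfl

/-- Lemma (square-root perturbation): if `‖X Xᵀ - Σ‖ ≤ ε₀²/4` with `Σ` psd and `N ≥ n`,
then there exists `J` with `J Jᵀ = Σ` and `‖J - X‖ ≤ ε₀`. -/
theorem stmt_6 {n N : ℕ} (hnN : n ≤ N) (X : Matrix (Fin n) (Fin N) ℝ)
    (S : Matrix (Fin n) (Fin n) ℝ) (hS : S.PosSemidef)
    (ε₀ : ℝ) (hε₀ : 0 ≤ ε₀)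
    (hclose : specNorm (X * Xᵀ - S) ≤ ε₀ ^ 2 / 4) :
    ∃ J : Matrix (Fin n) (Fin N) ℝ, J * Jᵀ = S ∧ specNorm (J - X) ≤ ε₀ := by
  obtain ⟨C, hC, hCC⟩ := hS.exists_posSemidef_mul_self_eq
  have hXX : (X * Xᵀ).PosSemidef := by
    simpa [conjTranspose_eq_transpose_of_trivial] using posSemidef_self_mul_conjTranspose X
  obtain ⟨B, hB, hBB⟩ := hXX.exists_posSemidef_mul_self_eq
  obtain ⟨V, hVV, hXBV⟩ := hB.exists_polar_decomposition (by simpa using hnN) X hBB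
  have hCt : Cᵀ = C := by rw [← conjTranspose_eq_transpose_of_trivial, hC.1.eq]
  refine ⟨C * V, ?_, ?_⟩
  · rw [transpose_mul, hCt, Matrix.mul_assoc, ← Matrix.mul_assoc V, hVV, Matrix.one_mul, hCC]
  · rw [specNorm_eq_l2_opNorm, hXBV, ← Matrix.sub_mul, l2_opNorm_mul_of_mul_conjTranspose_eq_one _
      (by rwa [conjTranspose_eq_transpose_of_trivial])]
    calc ‖C - B‖ ≤ √‖C * C - B * B‖ := hC.l2_opNorm_sub_le_sqrt hB
      _ = √(specNorm (X * Xᵀ - S)) := by rw [hCC, hBB, norm_sub_rev]; rfl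
      _ ≤ √((ε₀ / 2) ^ 2) := Real.sqrt_le_sqrt (by linarith)
      _ = ε₀ / 2 := Real.sqrt_sq (by linarith)
      _ ≤ ε₀ := by linarith
end

section
/- Let U be circulant implementing convolution with kernel u and let Σ(U) have entries [Σ(U)]_{ij} = (1/2)(1 − arccos(⟨u_i,u_j⟩/(‖u_i‖‖u_j‖))/π)⟨u_i,u_j⟩ where u_i are rows of U. Then Σ(U) is also circulant and Hermitian (symmetric), and hence is diagonalized by the discrete Fourier basis. -/
/-!
Inner products and norms of real vectors are invariant under a simultaneous permutation of the
coordinates, and the rows of a circulant matrix satisfy `u_i = u_{i-j} ∘ (· - j)`. Hence any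
such function of two rows depends only on `i - j`, i.e. `Σ(U)` is circulant; it is symmetric
because the formula is. Every circulant matrix is diagonalized by the DFT matrix, since each row
`k ↦ e^{2πijk/n}` of the latter is a character of `ℤ/n`, and the DFT matrix is invertible, being
a Vandermonde matrix in the distinct `n`-th roots of unity.
-/

open Matrix Finset

/-- The (unnormalized) DFT matrix `F_{jk} = e^{i 2π j k / n}`. -/
noncomputable def dftMatrix (n : ℕ) : Matrix (Fin n) (Fin n) ℂ :=
  fun j k => Complex.exp (Complex.I * 2 * Real.pi * (j.val : ℂ) * (k.val : ℂ) / (n : ℂ))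

namespace Matrix

variable {n α β : Type*} [AddCommGroup n]

theorem circulant_row_eq_comp_subRight (v : n → α) (i j : n) :
    circulant v i = circulant v (i - j) ∘ Equiv.subRight j := by
  ext l
  simp [circulant_apply, sub_sub_sub_cancel_right]

theorem of_circulant_rows_eq_circulant (v : n → α) (f : (n → α) → (n → α) → β)
    (hf : ∀ (e : Equiv.Perm n) a b, f (a ∘ e) (b ∘ e) = f a b) :
    of (fun i j => f (circulant v i) (circulant v j)) =
      circulant fun k => f (circulant v k) (circulant v 0) := by
  ext i j
  rw [of_apply, circulant_apply, circulant_row_eq_comp_subRight v i j,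
    circulant_row_eq_comp_subRight v j j, sub_self, hf]

end Matrix

section ArccosKernel

variable {ι : Type*} [Fintype ι]

noncomputable def arccosKernel (a b : ι → ℝ) : ℝ :=
  (1 / 2) *
    (1 - Real.arccos ((∑ l, a l * b l) /
        (Real.sqrt (∑ l, a l ^ 2) * Real.sqrt (∑ l, b l ^ 2))) / Real.pi) *
    (∑ l, a l * b l)

theorem arccosKernel_comm (a b : ι → ℝ) : arccosKernel a b = arccosKernel b a := by
  simp only [arccosKernel, mul_comm (a _), mul_comm (Real.sqrt (∑ l, a l ^ 2))]

theorem arccosKernel_comp_perm (e : Equiv.Perm ι) (a b : ι → ℝ) :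
    arccosKernel (a ∘ e) (b ∘ e) = arccosKernel a b := by
  simp only [arccosKernel, Function.comp_apply, Equiv.sum_comp e (fun l => a l * b l),
    Equiv.sum_comp e (fun l => a l ^ 2), Equiv.sum_comp e (fun l => b l ^ 2)]

end ArccosKernel

section DFT

variable {n : ℕ}

theorem dftMatrix_apply_eq_pow (j k : Fin n) :
    dftMatrix n j k = Complex.exp (2 * Real.pi * Complex.I / n) ^ (j.val * k.val) := by
  rw [← Complex.exp_nat_mul, dftMatrix]
  congr 1
  push_cast
  ring

variable [NeZero n]

theorem dftMatrix_apply_add (j a b : Fin n) :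
    dftMatrix n j (a + b) = dftMatrix n j a * dftMatrix n j b := by
  have hζ := Complex.isPrimitiveRoot_exp n (NeZero.ne n)
  simp only [dftMatrix_apply_eq_pow, ← pow_add, ← mul_add, Fin.val_add]
  rw [(hζ.isOfFinOrder (NeZero.ne n)).pow_eq_pow_iff_modEq, ← hζ.eq_orderOf]
  exact (Nat.mod_modEq _ n).mul_left _

theorem dftMatrix_mul_circulant (w : Fin n → ℂ) :
    dftMatrix n * circulant w = diagonal (dftMatrix n *ᵥ w) * dftMatrix n := by
  ext j k
  rw [mul_apply, diagonal_mul, mulVec, dotProduct, sum_mul]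
  refine (Fintype.sum_equiv (Equiv.addRight k) _ _ fun m => ?_).symm
  simp only [Equiv.coe_addRight, circulant_apply, add_sub_cancel_right, dftMatrix_apply_add]
  ring

theorem isUnit_det_dftMatrix : IsUnit (dftMatrix n).det := by
  have hζ := Complex.isPrimitiveRoot_exp n (NeZero.ne n)
  have hvdm : dftMatrix n =
      vandermonde fun j : Fin n => Complex.exp (2 * Real.pi * Complex.I / n) ^ j.val := by
    ext j k
    rw [dftMatrix_apply_eq_pow, vandermonde_apply, ← pow_mul]
  rw [hvdm, isUnit_iff_ne_zero, det_vandermonde_ne_zero_iff]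
  exact fun a b hab => Fin.ext (hζ.pow_inj a.isLt b.isLt hab)

theorem circulant_eq_dftMatrix_inv_mul_diagonal_mul (w : Fin n → ℂ) :
    circulant w = (dftMatrix n)⁻¹ * diagonal (dftMatrix n *ᵥ w) * dftMatrix n := by
  rw [Matrix.mul_assoc, ← dftMatrix_mul_circulant, ← Matrix.mul_assoc,
    nonsing_inv_mul _ isUnit_det_dftMatrix, Matrix.one_mul]

end DFT

theorem stmt_17_general (n : ℕ) [NeZero n] (u : Fin n → ℝ) :
    let U : Matrix (Fin n) (Fin n) ℝ := Matrix.circulant u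
    let K : Matrix (Fin n) (Fin n) ℝ := fun i j =>
      (1 / 2) *
        (1 - Real.arccos ((∑ l, U i l * U j l) /
            (Real.sqrt (∑ l, U i l ^ 2) * Real.sqrt (∑ l, U j l ^ 2))) / Real.pi) *
        (∑ l, U i l * U j l)
    (∃ w : Fin n → ℝ, K = Matrix.circulant w) ∧ K.IsSymm ∧
      ∃ d : Fin n → ℂ,
        K.map (fun x : ℝ => (x : ℂ)) = (dftMatrix n)⁻¹ * Matrix.diagonal d * dftMatrix n := by
  intro U K
  have hK : K = circulant fun k => arccosKernel (U k) (U 0) :=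
    of_circulant_rows_eq_circulant u arccosKernel arccosKernel_comp_perm
  refine ⟨⟨_, hK⟩, IsSymm.ext fun i j => arccosKernel_comm (U j) (U i), ?_⟩
  rw [hK, map_circulant]
  exact ⟨_, circulant_eq_dftMatrix_inv_mul_diagonal_mul _⟩

/-- For a circulant `U` with kernel `u`, the matrix `Σ(U)` with entries
`(1/2)(1 - arccos(⟨u_i,u_j⟩/(‖u_i‖‖u_j‖))/π)⟨u_i,u_j⟩` (rows `u_i` of `U`) is again
circulant and symmetric, hence diagonalized by the discrete Fourier basis. -/
theorem stmt_17 (n : ℕ) [NeZero n] (u : Fin n → ℝ) (hu : u ≠ 0) :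
    let U : Matrix (Fin n) (Fin n) ℝ := Matrix.circulant u
    let K : Matrix (Fin n) (Fin n) ℝ := fun i j =>
      (1 / 2) *
        (1 - Real.arccos ((∑ l, U i l * U j l) /
            (Real.sqrt (∑ l, U i l ^ 2) * Real.sqrt (∑ l, U j l ^ 2))) / Real.pi) *
        (∑ l, U i l * U j l)
    (∃ w : Fin n → ℝ, K = Matrix.circulant w) ∧ K.IsSymm ∧
      ∃ d : Fin n → ℂ,
        K.map (fun x : ℝ => (x : ℂ)) = (dftMatrix n)⁻¹ * Matrix.diagonal d * dftMatrix n :=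
  stmt_17_general n u
end
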